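/- arXiv:1702.01253 — 4 statements merged into one kernel-verified Lean document; each statement's English description precedes it below -/
import Mathlib

section
/- Let Γ be a distance-regular digraph of girth g ≥ 3 that is stable (∂(x,y)+∂(y,x)=g for all x≠y with ∂(x,y)<g) and has diameter D = g. Then for any two vertices u, v with ∂(u,v) = g, the vertices u and v have a common out-neighbor. -/
open Set

namespace PaperDRD

variable {V : Type*}

def HasWalk (E : V → V → Prop) (u v : V) (n : ℕ) : Prop :=
  ∃ f : Fin (n + 1) → V, f 0 = u ∧ f (Fin.last n) = v ∧
    ∀ i : Fin n, E (f i.castSucc) (f i.succ)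

def StronglyConnected (E : V → V → Prop) : Prop :=
  ∀ u v : V, ∃ n : ℕ, HasWalk E u v n

noncomputable def ddist (E : V → V → Prop) (u v : V) : ℕ :=
  sInf {n : ℕ | HasWalk E u v n}

noncomputable def girth (E : V → V → Prop) : ℕ :=
  sInf {n : ℕ | 0 < n ∧ ∃ u : V, HasWalk E u u n}

noncomputable def diam [Fintype V] (E : V → V → Prop) : ℕ :=
  Finset.univ.sup fun p : V × V => ddist E p.1 p.2

noncomputable def outDeg (E : V → V → Prop) (x : V) : ℕ := {y : V | E x y}.ncard

noncomputable def inDeg (E : V → V → Prop) (x : V) : ℕ := {y : V | E y x}.ncard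

def IsRegular (E : V → V → Prop) (k : ℕ) : Prop :=
  ∀ x : V, outDeg E x = k ∧ inDeg E x = k

def DelEdges (E : V → V → Prop) (F : Set (V × V)) : V → V → Prop :=
  fun a b => E a b ∧ (a, b) ∉ F

def IsEdgeCut (E : V → V → Prop) (F : Set (V × V)) : Prop :=
  (∀ e ∈ F, E e.1 e.2) ∧ ¬ StronglyConnected (DelEdges E F)

noncomputable def edgeConnectivity (E : V → V → Prop) : ℕ :=
  sInf {n : ℕ | ∃ F : Set (V × V), IsEdgeCut E F ∧ F.ncard = n}

def IsMinEdgeCut (E : V → V → Prop) (F : Set (V × V)) : Prop :=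
  IsEdgeCut E F ∧ F.ncard = edgeConnectivity E

def outStar (E : V → V → Prop) (x : V) : Set (V × V) := {e : V × V | e.1 = x ∧ E x e.2}

def inStar (E : V → V → Prop) (x : V) : Set (V × V) := {e : V × V | e.2 = x ∧ E e.1 x}

def IsDRDigraph (E : V → V → Prop) (k : ℕ) : Prop :=
  Irreflexive E ∧ IsRegular E k ∧ StronglyConnected E ∧
    ∀ (i m : ℕ) (u v u' v' : V), 1 ≤ m → ddist E u v = m → ddist E u' v' = m →
      {w : V | ddist E u w = i ∧ E v w}.ncard = {w : V | ddist E u' w = i ∧ E v' w}.ncard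

def IsSRDigraph (E : V → V → Prop) (n k t lam mu : ℕ) : Prop :=
  Irreflexive E ∧ Nat.card V = n ∧ IsRegular E k ∧ StronglyConnected E ∧
    (∀ u : V, {w : V | E u w ∧ E w u}.ncard = t) ∧
    (∀ u v : V, u ≠ v → E u v → {w : V | E u w ∧ E w v}.ncard = lam) ∧
    (∀ u v : V, u ≠ v → ¬ E u v → {w : V | E u w ∧ E w v}.ncard = mu)

def IsUndirectedCycleN (E : V → V → Prop) (n : ℕ) : Prop :=
  ∃ e : V ≃ ZMod n, ∀ a b : V, E a b ↔ (e b = e a + 1 ∨ e a = e b + 1)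

def IsUndirectedCycle (E : V → V → Prop) : Prop :=
  ∃ n : ℕ, 3 ≤ n ∧ IsUndirectedCycleN E n

lemma hasWalk_one_iff (E : V → V → Prop) (u v : V) : HasWalk E u v 1 ↔ E u v := by
  constructor
  · rintro ⟨f, h0, hl, hs⟩
    have := hs 0
    rw [show Fin.castSucc (0 : Fin 1) = 0 from rfl,
      show Fin.succ (0 : Fin 1) = Fin.last 1 from rfl, h0, hl] at this
    exact this
  · intro hE
    refine ⟨![u, v], rfl, rfl, ?_⟩
    intro i
    fin_cases i
    simpa using hE

lemma hasWalk_cons {E : V → V → Prop} {u x v : V} {n : ℕ}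
    (hE : E u x) (h : HasWalk E x v n) : HasWalk E u v (n + 1) := by
  obtain ⟨f, h0, hl, hs⟩ := h
  have e1 : Fin.cons (α := fun _ => V) u f (Fin.last (n + 1)) = f (Fin.last n) := rfl
  have e2 : ∀ j : Fin (n + 1), Fin.cons (α := fun _ => V) u f j.succ = f j := fun _ => rfl
  have e3 : ∀ j : Fin n,
      Fin.cons (α := fun _ => V) u f (Fin.castSucc j.succ) = f j.castSucc := fun _ => rfl
  have e4 : Fin.cons (α := fun _ => V) u f (Fin.castSucc 0) = u := rfl
  refine ⟨Fin.cons u f, rfl, ?_, ?_⟩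
  · rw [e1]; exact hl
  · intro i
    induction i using Fin.cases with
    | zero => rw [e4, e2, h0]; exact hE
    | succ j => rw [e3, e2]; exact hs j

lemma hasWalk_tail {E : V → V → Prop} {u v : V} {n : ℕ}
    (h : HasWalk E u v (n + 1)) : ∃ x, E u x ∧ HasWalk E x v n := by
  obtain ⟨f, h0, hl, hs⟩ := h
  refine ⟨f (Fin.succ 0), ?_, fun i => f (Fin.succ i), rfl, ?_, ?_⟩
  · have := hs 0
    rw [show Fin.castSucc (0 : Fin (n+1)) = 0 from rfl, h0] at this
    exact this
  · show f (Fin.succ (Fin.last n)) = v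
    rw [Fin.succ_last]
    exact hl
  · intro i
    show E (f (Fin.succ i.castSucc)) (f (Fin.succ i.succ))
    rw [Fin.succ_castSucc]
    exact hs i.succ

lemma ddist_le {E : V → V → Prop} {u v : V} {n : ℕ} (h : HasWalk E u v n) :
    ddist E u v ≤ n := Nat.sInf_le h

lemma hasWalk_ddist {E : V → V → Prop} (hsc : StronglyConnected E) (u v : V) :
    HasWalk E u v (ddist E u v) := by
  have hne : {n : ℕ | HasWalk E u v n}.Nonempty := hsc u v
  exact Nat.sInf_mem hne

theorem stmt3 [Fintype V] (E : V → V → Prop) (k g : ℕ)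
    (h : IsDRDigraph E k) (hg3 : 3 ≤ g) (hg : girth E = g)
    (hstable : ∀ x y : V, x ≠ y → ddist E x y < g → ddist E x y + ddist E y x = g)
    (hD : diam E = g) :
    ∀ u v : V, ddist E u v = g → ∃ w : V, E u w ∧ E v w := by
  intro u v huv
  have hsc : StronglyConnected E := h.2.2.1
  have hw : HasWalk E u v g := huv ▸ hasWalk_ddist hsc u v
  obtain ⟨g', rfl⟩ : ∃ g', g = g' + 1 := ⟨g - 1, by omega⟩
  obtain ⟨x, hux, hxv⟩ := hasWalk_tail hw
  have hle : ddist E x v ≤ g' := ddist_le hxv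
  have hxvne : x ≠ v := by
    intro he
    have h1 : ddist E u v ≤ 1 := ddist_le ((hasWalk_one_iff E u v).2 (he ▸ hux))
    omega
  -- ddist u v ≤ ddist x v + 1
  have hwx : HasWalk E x v (ddist E x v) := hasWalk_ddist hsc x v
  have h2 : ddist E u v ≤ ddist E x v + 1 := ddist_le (hasWalk_cons hux hwx)
  have hxv' : ddist E x v = g' := by omega
  have hst := hstable x v hxvne (by omega)
  have hvx : ddist E v x = 1 := by omega
  have : HasWalk E v x 1 := hvx ▸ hasWalk_ddist hsc v x
  exact ⟨x, hux, (hasWalk_one_iff E v x).1 this⟩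

end PaperDRD
end

section
/- Let Γ be a strongly connected k-regular digraph and let F = [A,B] be an edge cut given by a partition V = A ∪ B, with F the set of edges from A to B, and suppose |F| ≤ k. If r = max over x ∈ A of the number of out-neighbors of x in A, then r+1 ≤ |A| ≤ k/(k−r) whenever r < k; consequently r ∈ {0, k−1, k}. -/
/-!
Every vertex of `A` has at most `r` out-neighbours in `A`, hence at least `k - r` in `B`, so
`(k - r) |A| ≤ |F| ≤ k`. A vertex attaining `r`, together with its `r` out-neighbours in `A`
(there are no loops), gives `|A| ≥ r + 1`. Hence `(k - r) (r + 1) ≤ k`, and for `r < k` this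
forces `r = 0` or `r = k - 1`.
-/

open Set

namespace PaperDRD

variable {V : Type*}

section OutNeighbours

variable [Finite V] (E : V → V → Prop)

theorem ncard_outNbrs_inter_add_inter_compl (x : V) (A : Set V) :
    {y : V | E x y ∧ y ∈ A}.ncard + {y : V | E x y ∧ y ∈ Aᶜ}.ncard = outDeg E x := by
  rw [outDeg, ← Set.ncard_union_eq (Set.disjoint_left.2 fun _ h h' => h'.2 h.2)]
  congr 1
  ext y
  by_cases hy : y ∈ A <;> simp [hy]

theorem ncard_outNbrs_inter_lt_ncard {A : Set V} {x : V} (hx : x ∈ A) (hxx : ¬ E x x) :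
    {y : V | E x y ∧ y ∈ A}.ncard < A.ncard :=
  Set.ncard_lt_ncard <| (Set.ssubset_iff_of_subset fun _ hy => hy.2).2 ⟨x, hx, fun h => hxx h.1⟩

end OutNeighbours

theorem ncard_cut_eq_sum [Fintype V] (E : V → V → Prop) (A B : Set V) [DecidablePred (· ∈ A)] :
    {e : V × V | E e.1 e.2 ∧ e.1 ∈ A ∧ e.2 ∈ B}.ncard =
      ∑ x ∈ A.toFinset, {y : V | E x y ∧ y ∈ B}.ncard := by
  classical
  have hcut : {e : V × V | E e.1 e.2 ∧ e.1 ∈ A ∧ e.2 ∈ B} =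
      ↑((A.toFinset ×ˢ B.toFinset).filter fun e => E e.1 e.2) := by
    ext e
    simp [and_comm]
  rw [hcut, Set.ncard_coe_finset, Finset.card_filter, Finset.sum_product]
  refine Finset.sum_congr rfl fun x _ => ?_
  rw [← Finset.card_filter, ← Set.ncard_coe_finset]
  congr 1
  ext y
  simp [and_comm]

theorem eq_zero_or_eq_sub_one_of_sub_mul_succ_le {k r : ℕ} (hrk : r < k)
    (h : (k - r) * (r + 1) ≤ k) : r = 0 ∨ r = k - 1 := by
  -- with `k = r + d + 1` the hypothesis reads `d * r ≤ 0`
  obtain ⟨d, rfl⟩ := Nat.exists_eq_add_of_lt hrk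
  rw [show r + d + 1 - r = d + 1 by omega] at h
  rcases Nat.eq_zero_or_pos r with hr | hr
  · exact .inl hr
  · rcases Nat.eq_zero_or_pos d with hd | hd
    · exact .inr (by omega)
    · nlinarith

theorem stmt6_general [Fintype V] (E : V → V → Prop) (k : ℕ)
    (hirr : Irreflexive E) (hreg : IsRegular E k)
    (A B : Set V)
    (hdisj : Disjoint A B) (hcover : A ∪ B = Set.univ)
    (hF : {e : V × V | E e.1 e.2 ∧ e.1 ∈ A ∧ e.2 ∈ B}.ncard ≤ k)
    (r : ℕ)
    (hr1 : ∀ x ∈ A, {y : V | E x y ∧ y ∈ A}.ncard ≤ r)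
    (hr2 : ∃ x ∈ A, {y : V | E x y ∧ y ∈ A}.ncard = r) :
    (r < k → r + 1 ≤ A.ncard ∧ A.ncard ≤ k / (k - r)) ∧
      (r = 0 ∨ r = k - 1 ∨ r = k) := by
  classical
  obtain ⟨x₀, hx₀, hr⟩ := hr2
  obtain rfl : B = Aᶜ := (IsCompl.of_eq hdisj.eq_bot hcover).compl_eq.symm
  have hsplit (x : V) : {y | E x y ∧ y ∈ A}.ncard + {y | E x y ∧ y ∈ Aᶜ}.ncard = k :=
    (ncard_outNbrs_inter_add_inter_compl E x A).trans (hreg x).1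
  have hrA : r + 1 ≤ A.ncard := hr ▸ ncard_outNbrs_inter_lt_ncard E hx₀ (hirr x₀)
  have hcut : (k - r) * A.ncard ≤ k :=
    calc (k - r) * A.ncard = ∑ _x ∈ A.toFinset, (k - r) := by
          simp [Set.ncard_eq_toFinset_card', mul_comm]
      _ ≤ ∑ x ∈ A.toFinset, {y | E x y ∧ y ∈ Aᶜ}.ncard := Finset.sum_le_sum fun x hx => by
          have := hr1 x (Set.mem_toFinset.1 hx); have := hsplit x; omega
      _ = _ := (ncard_cut_eq_sum E A Aᶜ).symm
      _ ≤ k := hF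
  refine ⟨fun hrk => ⟨hrA, (Nat.le_div_iff_mul_le (by omega)).2 (by linarith)⟩, ?_⟩
  rcases (show r ≤ k by have := hsplit x₀; omega).lt_or_eq with hrk | rfl
  · exact (eq_zero_or_eq_sub_one_of_sub_mul_succ_le hrk
      ((Nat.mul_le_mul_left _ hrA).trans hcut)).imp_right .inl
  · exact .inr (.inr rfl)

theorem stmt6 [Fintype V] (E : V → V → Prop) (k : ℕ)
    (hirr : Irreflexive E) (hreg : IsRegular E k) (hsc : StronglyConnected E)
    (A B : Set V) (hA : A.Nonempty) (hB : B.Nonempty)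
    (hdisj : Disjoint A B) (hcover : A ∪ B = Set.univ)
    (hF : {e : V × V | E e.1 e.2 ∧ e.1 ∈ A ∧ e.2 ∈ B}.ncard ≤ k)
    (r : ℕ)
    (hr1 : ∀ x ∈ A, {y : V | E x y ∧ y ∈ A}.ncard ≤ r)
    (hr2 : ∃ x ∈ A, {y : V | E x y ∧ y ∈ A}.ncard = r) :
    (r < k → r + 1 ≤ A.ncard ∧ A.ncard ≤ k / (k - r)) ∧
      (r = 0 ∨ r = k - 1 ∨ r = k) :=
  stmt6_general E k hirr hreg A B hdisj hcover hF r hr1 hr2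

end PaperDRD
end

section
/- Let Γ = C[X_1,…,X_t] with t ≥ 3 and all |X_i| = k ≥ 2, and let F be an edge cut of Γ with |F| ≤ k. Then F is the set of all edges coming out of a single vertex or the set of all edges going into a single vertex, unless k = 2 and t = 2 (excluded) — i.e., for t ≥ 3 and k ≥ 2 every edge cut of size at most k is a full out-star or in-star of a vertex. -/
open Set

namespace PaperDRD

variable {V : Type*}

/-!
Take a vertex set `S` that is closed under the edges outside `F` and contains some but not all
vertices (the vertices reachable from `u` in `Γ - F`, where `v` is unreachable). If `a i` vertices
of `X i` lie in `S`, then `F` contains the `∑ i, a i * (k - a (i + 1))` edges leaving `S`, so this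
sum is at most `k`. A layer profile with `0 < a i < k` throughout makes the sum at least
`t * (k - 1) > k`. Otherwise some layer is empty or full, and the bound forces `S` to be a single
vertex (`F` is its out-star) or its complement to be one (`F` is its in-star).
-/

open Finset Fin.CommRing

theorem HasWalk.snoc {E : V → V → Prop} {u w y : V} {n : ℕ}
    (h : HasWalk E u w n) (he : E w y) : HasWalk E u y (n + 1) := by
  obtain ⟨f, h0, hl, hs⟩ := h
  refine ⟨Fin.snoc f y, ?_, by simp, fun i => ?_⟩
  · rw [show (0 : Fin (n + 2)) = Fin.castSucc 0 from rfl, Fin.snoc_castSucc, h0]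
  · refine Fin.lastCases ?_ (fun i => ?_) i
    · rw [Fin.succ_last, Fin.snoc_last, Fin.snoc_castSucc, hl]
      exact he
    · rw [Fin.succ_castSucc, Fin.snoc_castSucc, Fin.snoc_castSucc]
      exact hs i

theorem exists_closed_of_not_stronglyConnected [Fintype V] {E : V → V → Prop}
    (h : ¬ StronglyConnected E) :
    ∃ S : Finset V, ∃ u ∈ S, ∃ v ∉ S, ∀ x y, x ∈ S → E x y → y ∈ S := by
  classical
  obtain ⟨u, v, huv⟩ : ∃ u v, ∀ n, ¬ HasWalk E u v n := by
    simpa [StronglyConnected] using h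
  refine ⟨({w | ∃ n, HasWalk E u w n} : Finset V), u, ?_, v, by simpa using huv, ?_⟩
  · simp only [mem_filter, Finset.mem_univ, true_and]
    exact ⟨0, fun _ => u, rfl, rfl, fun i => i.elim0⟩
  · simp only [mem_filter, Finset.mem_univ, true_and]
    rintro x y ⟨n, hn⟩ hxy
    exact ⟨n + 1, hn.snoc hxy⟩

theorem IsEdgeCut.exists_leaving_edges_subset [Fintype V] {E : V → V → Prop} {F : Set (V × V)}
    (h : IsEdgeCut E F) :
    ∃ S : Finset V, ∃ u ∈ S, ∃ v ∉ S, ∀ x y, x ∈ S → y ∉ S → E x y → (x, y) ∈ F := by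
  obtain ⟨S, u, hu, v, hv, hS⟩ := exists_closed_of_not_stronglyConnected h.2
  exact ⟨S, u, hu, v, hv, fun x y hx hy hxy => by_contra fun hF => hy (hS x y hx ⟨hxy, hF⟩)⟩

theorem outStar_eq_image (E : V → V → Prop) (x : V) :
    outStar E x = Prod.mk x '' {y | E x y} := by
  ext ⟨a, b⟩
  simp [outStar, and_comm, eq_comm]

theorem inStar_eq_image (E : V → V → Prop) (x : V) :
    inStar E x = (fun y => (y, x)) '' {y | E y x} := by
  ext ⟨a, b⟩
  simp [inStar, and_comm, eq_comm]

theorem ncard_outStar (E : V → V → Prop) (x : V) : (outStar E x).ncard = outDeg E x := by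
  rw [outStar_eq_image, Set.ncard_image_of_injective _ (Prod.mk_right_injective x), outDeg]

theorem ncard_inStar (E : V → V → Prop) (x : V) : (inStar E x).ncard = inDeg E x := by
  rw [inStar_eq_image, Set.ncard_image_of_injective _ (Prod.mk_left_injective x), inDeg]

theorem eq_outStar_of_subset {E : V → V → Prop} {F : Set (V × V)} {x : V} (hF : F.Finite)
    (hsub : outStar E x ⊆ F) (hle : F.ncard ≤ outDeg E x) : F = outStar E x :=
  (Set.eq_of_subset_of_ncard_le hsub (by rwa [ncard_outStar]) hF).symm

theorem eq_inStar_of_subset {E : V → V → Prop} {F : Set (V × V)} {x : V} (hF : F.Finite)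
    (hsub : inStar E x ⊆ F) (hle : F.ncard ≤ inDeg E x) : F = inStar E x :=
  (Set.eq_of_subset_of_ncard_le hsub (by rwa [ncard_inStar]) hF).symm

theorem exists_layer_map {ι : Type*} {X : ι → Finset V}
    (hdisj : ∀ i j, i ≠ j → Disjoint (X i) (X j)) (hcover : ∀ v, ∃ i, v ∈ X i) :
    ∃ ℓ : V → ι, ∀ v i, v ∈ X i ↔ ℓ v = i := by
  choose ℓ hℓ using hcover
  refine ⟨ℓ, fun v i => ⟨fun hv => ?_, fun h => h ▸ hℓ v⟩⟩
  by_contra hne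
  exact disjoint_left.mp (hdisj _ _ hne) (hℓ v) hv

theorem Fin.forall_of_add_one_imp {t : ℕ} [NeZero t] {P : Fin t → Prop}
    (h : ∀ i, P (i + 1) → P i) {i₀ : Fin t} (h₀ : P i₀) (j : Fin t) : P j := by
  have key : ∀ n : ℕ, P (i₀ - n) := by
    intro n
    induction n with
    | zero => simpa using h₀
    | succ n ih => exact h _ (by rwa [show i₀ - ↑(n + 1) + 1 = i₀ - n by push_cast; ring])
  simpa using key (i₀ - j).val

section LayerProfile

variable {t : ℕ} [NeZero t] {k : ℕ} {a : Fin t → ℕ}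

theorem sum_eq_one_of_sum_mul_sub_le (hk : 2 ≤ k) (h : ∑ i, a i * (k - a (i + 1)) ≤ k)
    (hzero : ∃ i, a i = 0) (hpos : ∃ i, a i ≠ 0) : ∑ i, a i = 1 := by
  obtain ⟨i₀, hi₀, hi₀'⟩ : ∃ i, a i ≠ 0 ∧ a (i + 1) = 0 := by
    by_contra! hno
    obtain ⟨i, hi⟩ := hzero
    obtain ⟨j, hj⟩ := hpos
    exact hj (Fin.forall_of_add_one_imp (P := (a · = 0))
      (fun i h => by_contra fun h' => hno i h' h) hi j)
  have hsplit := add_sum_erase univ (fun i => a i * (k - a (i + 1))) (mem_univ i₀)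
  simp only [hi₀', Nat.sub_zero] at hsplit
  have hone : a i₀ = 1 := by
    have : a i₀ * k ≤ 1 * k := by omega
    have := Nat.le_of_mul_le_mul_right this (by omega)
    omega
  have hrest : ∀ j ≠ i₀, a j * (k - a (j + 1)) = 0 := by
    rw [hone, one_mul] at hsplit
    have hzero : ∑ i ∈ univ.erase i₀, a i * (k - a (i + 1)) = 0 := by omega
    exact fun j hj => sum_eq_zero_iff.mp hzero j (mem_erase.mpr ⟨hj, mem_univ j⟩)
  have hothers : ∀ j, j = i₀ ∨ a j = 0 := by
    refine Fin.forall_of_add_one_imp (fun j hj => ?_) (Or.inl rfl)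
    by_cases hji : j = i₀
    · exact Or.inl hji
    have hlt : a (j + 1) < k := by rcases hj with hj | hj <;> simp only [hj, hone] <;> omega
    exact Or.inr ((Nat.mul_eq_zero.mp (hrest j hji)).resolve_right (by omega))
  rw [Fintype.sum_eq_single i₀ fun j hj => (hothers j).resolve_left hj, hone]

theorem lt_sum_mul_sub (ht : 3 ≤ t) (hk : 2 ≤ k) (hpos : ∀ i, a i ≠ 0) (hlt : ∀ i, a i < k) :
    k < ∑ i, a i * (k - a (i + 1)) := by
  have hterm : ∀ i, a i + (k - a (i + 1)) ≤ a i * (k - a (i + 1)) + 1 := by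
    intro i
    have hx : 1 ≤ a i := Nat.one_le_iff_ne_zero.mpr (hpos i)
    have hy : 1 ≤ k - a (i + 1) := by have := hlt (i + 1); omega
    generalize k - a (i + 1) = y at hy ⊢
    nlinarith
  have hshift : ∑ i, (k - a (i + 1)) = ∑ i, (k - a i) :=
    Fintype.sum_equiv (Equiv.addRight 1) _ _ fun _ => rfl
  have htotal : ∑ i, (a i + (k - a (i + 1))) = t * k := by
    rw [sum_add_distrib, hshift, ← sum_add_distrib]
    simp [Nat.add_sub_cancel' (hlt _).le]
  have := sum_le_sum fun i (_ : i ∈ Finset.univ) => hterm i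
  rw [htotal, sum_add_distrib] at this
  simp only [sum_const, card_univ, Fintype.card_fin, smul_eq_mul, mul_one] at this
  nlinarith

theorem sum_mul_sub_reverse (ha : ∀ i, a i ≤ k) :
    ∑ i, (k - a (-i)) * (k - (k - a (-(i + 1)))) = ∑ i, a i * (k - a (i + 1)) := by
  refine Fintype.sum_equiv ((Equiv.addRight 1).trans (Equiv.neg _)) _ _ fun i => ?_
  simp only [Equiv.trans_apply, Equiv.coe_addRight, Equiv.neg_apply, Nat.sub_sub_self (ha _)]
  rw [show -(i + 1) + 1 = -i by ring, mul_comm]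

theorem sum_eq_one_or_sum_sub_eq_one (ht : 3 ≤ t) (hk : 2 ≤ k) (ha : ∀ i, a i ≤ k)
    (h : ∑ i, a i * (k - a (i + 1)) ≤ k) (hpos : ∃ i, a i ≠ 0) (hfull : ∃ i, a i ≠ k) :
    ∑ i, a i = 1 ∨ ∑ i, (k - a i) = 1 := by
  by_cases hzero : ∃ i, a i = 0
  · exact Or.inl (sum_eq_one_of_sum_mul_sub_le hk h hzero hpos)
  by_cases hk' : ∃ i, a i = k
  · -- the same argument, run on the complementary profile of the reversed cycle
    obtain ⟨i, hi⟩ := hk'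
    obtain ⟨j, hj⟩ := hfull
    have := sum_eq_one_of_sum_mul_sub_le (a := fun i => k - a (-i)) hk
      ((sum_mul_sub_reverse ha).trans_le h) ⟨-i, by simp [hi]⟩
      ⟨-j, by have := ha j; simp only [neg_neg]; omega⟩
    exact Or.inr ((Fintype.sum_equiv (Equiv.neg _) _ _ fun _ => rfl).symm.trans this)
  push Not at hzero hk'
  exact absurd h (not_le.mpr (lt_sum_mul_sub ht hk hzero fun i => (ha i).lt_of_ne (hk' i)))

end LayerProfile

section Layered

variable [Fintype V] {t k : ℕ} [NeZero t] {ℓ : V → Fin t}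

theorem sum_card_mul_card_le_ncard [DecidableEq V] {S : Finset V} {F : Set (V × V)}
    (hF : ∀ x y, x ∈ S → y ∉ S → ℓ y = ℓ x + 1 → (x, y) ∈ F) :
    ∑ i, #{x ∈ S | ℓ x = i} * #{y ∈ Sᶜ | ℓ y = i + 1} ≤ F.ncard := by
  classical
  calc ∑ i, #{x ∈ S | ℓ x = i} * #{y ∈ Sᶜ | ℓ y = i + 1}
      = #(univ.biUnion fun i => {x ∈ S | ℓ x = i} ×ˢ {y ∈ Sᶜ | ℓ y = i + 1}) := by
        rw [card_biUnion fun i _ j _ hij => disjoint_left.mpr fun p hi hj => hij ?_]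
        · exact sum_congr rfl fun i _ => (card_product _ _).symm
        · simp only [mem_product, mem_filter] at hi hj
          exact hi.1.2.symm.trans hj.1.2
    _ ≤ #F.toFinset := card_le_card fun p hp => by
        simp only [Finset.mem_biUnion, Finset.mem_univ, true_and, mem_product, mem_filter,
          Finset.mem_compl] at hp
        obtain ⟨i, ⟨hx, rfl⟩, hy, hi⟩ := hp
        simpa using hF p.1 p.2 hx hy hi
    _ = F.ncard := (Set.ncard_eq_toFinset_card' F).symm

variable {E : V → V → Prop}

theorem isRegular_of_layers (hcard : ∀ i, #{x | ℓ x = i} = k)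
    (hE : ∀ x y, E x y ↔ ℓ y = ℓ x + 1) : IsRegular E k := by
  intro x
  simp only [outDeg, inDeg, hE]
  constructor
  · rw [← hcard (ℓ x + 1), ← Set.ncard_coe_finset, coe_filter]
    simp
  · rw [← hcard (ℓ x - 1), ← Set.ncard_coe_finset, coe_filter]
    simp [eq_sub_iff_add_eq, eq_comm]

theorem eq_outStar_or_eq_inStar_of_ncard_le [DecidableEq V] (ht : 3 ≤ t) (hk : 2 ≤ k)
    (hcard : ∀ i, #{x | ℓ x = i} = k) (hE : ∀ x y, E x y ↔ ℓ y = ℓ x + 1)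
    {F : Set (V × V)} (hcut : IsEdgeCut E F) (hFk : F.ncard ≤ k) :
    (∃ x, F = outStar E x) ∨ ∃ x, F = inStar E x := by
  obtain ⟨S, u, hu, v, hv, hS⟩ := hcut.exists_leaving_edges_subset
  have hloop : ∀ x y, E x y → x ≠ y := by
    rintro x _ hxy rfl
    rw [hE] at hxy
    simp at hxy
    omega
  have hreg := isRegular_of_layers hcard hE
  set a : Fin t → ℕ := fun i => #{x ∈ S | ℓ x = i}
  have hlayer : ∀ i, a i + #{x ∈ Sᶜ | ℓ x = i} = k := fun i => by
    rw [← card_union_of_disjoint (disjoint_filter_filter disjoint_compl_right), ← filter_union,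
      union_compl, hcard]
  have hcompl : ∀ i, #{x ∈ Sᶜ | ℓ x = i} = k - a i := fun i => by have := hlayer i; omega
  have hsum : ∑ i, a i * (k - a (i + 1)) ≤ k := by
    simpa only [hcompl] using (sum_card_mul_card_le_ncard (ℓ := ℓ)
      fun x y hx hy hxy => hS x y hx hy ((hE x y).mpr hxy)).trans hFk
  have hfiber : ∀ T : Finset V, #T = ∑ i, #{x ∈ T | ℓ x = i} := fun T =>
    card_eq_sum_card_fiberwise fun _ _ => Finset.mem_univ _
  have hpos : a (ℓ u) ≠ 0 := card_ne_zero.mpr ⟨u, by simp [hu]⟩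
  have hfull : a (ℓ v) ≠ k := by
    have : #{x ∈ Sᶜ | ℓ x = ℓ v} ≠ 0 := card_ne_zero.mpr ⟨v, by simp [hv]⟩
    have := hlayer (ℓ v)
    omega
  rcases sum_eq_one_or_sum_sub_eq_one ht hk (fun i => by have := hlayer i; omega) hsum
    ⟨_, hpos⟩ ⟨_, hfull⟩ with h | h
  · obtain ⟨x, rfl⟩ := card_eq_one.mp ((hfiber S).trans h)
    refine Or.inl ⟨x, eq_outStar_of_subset F.toFinite ?_ (hFk.trans_eq (hreg x).1.symm)⟩
    rintro ⟨_, y⟩ ⟨rfl, hxy⟩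
    exact hS _ y (mem_singleton_self _) (by simpa using (hloop _ _ hxy).symm) hxy
  · obtain ⟨w, hw⟩ := card_eq_one.mp ((hfiber Sᶜ).trans (by simpa only [hcompl] using h))
    have hout : ∀ y, y ∉ S ↔ y = w := fun y => by
      rw [← Finset.mem_compl, hw, Finset.mem_singleton]
    refine Or.inr ⟨w, eq_inStar_of_subset F.toFinite ?_ (hFk.trans_eq (hreg w).2.symm)⟩
    rintro ⟨z, _⟩ ⟨rfl, hzw⟩
    refine hS z _ ?_ ((hout _).mpr rfl) hzw
    by_contra hz
    exact hloop _ _ hzw ((hout z).mp hz)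

end Layered

theorem stmt9 [Fintype V] (t k : ℕ) [NeZero t] (ht : 3 ≤ t) (hk : 2 ≤ k)
    (X : Fin t → Finset V)
    (hdisj : ∀ i j : Fin t, i ≠ j → Disjoint (X i) (X j))
    (hcard : ∀ i : Fin t, (X i).card = k)
    (hcover : ∀ v : V, ∃ i : Fin t, v ∈ X i)
    (E : V → V → Prop)
    (hE : ∀ x y : V, E x y ↔ ∃ i : Fin t, x ∈ X i ∧ y ∈ X (i + 1))
    (F : Set (V × V)) (hcut : IsEdgeCut E F) (hFk : F.ncard ≤ k) :
    (∃ x : V, F = outStar E x) ∨ (∃ x : V, F = inStar E x) := by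
  classical
  obtain ⟨ℓ, hℓ⟩ := exists_layer_map hdisj hcover
  refine eq_outStar_or_eq_inStar_of_ncard_le (ℓ := ℓ) ht hk (fun i => ?_) (fun x y => ?_) hcut hFk
  · rw [← hcard i]
    congr 1
    ext v
    simp [hℓ]
  · simp [hE, hℓ]

end PaperDRD
end

section
/- Let Γ be a strongly regular digraph with parameters (n,k,t,λ,μ), μ ≥ 1, and let V = A ∪ B be a partition with |A| ≤ |B| and at most k edges from A to B. If some vertex x ∈ A has all k of its out-neighbors in A, then |B| ≤ k. -/
open Set

namespace PaperDRD

variable {V : Type*}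

theorem stmt13 [Fintype V] (E : V → V → Prop) (n k t lam mu : ℕ)
    (h : IsSRDigraph E n k t lam mu) (hmu : 1 ≤ mu)
    (A B : Set V) (hdisj : Disjoint A B) (hcover : A ∪ B = Set.univ)
    (hAB : A.ncard ≤ B.ncard)
    (hF : {e : V × V | E e.1 e.2 ∧ e.1 ∈ A ∧ e.2 ∈ B}.ncard ≤ k)
    (x : V) (hx : x ∈ A) (hout : ∀ y : V, E x y → y ∈ A) :
    B.ncard ≤ k := by
  classical
  obtain ⟨hirr, -, -, -, -, -, hmu'⟩ := h
  have hwit : ∀ v ∈ B, ∃ w, E x w ∧ E w v := by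
    intro v hv
    have hvA : v ∉ A := fun hvA => (hdisj.ne_of_mem hvA hv) rfl
    have hne : x ≠ v := fun e => hvA (e ▸ hx)
    have hnE : ¬ E x v := fun hE => hvA (hout v hE)
    have hcard := hmu' x v hne hnE
    have hpos : 0 < {w : V | E x w ∧ E w v}.ncard := hcard ▸ hmu
    obtain ⟨w, hw⟩ := (Set.nonempty_of_ncard_ne_zero hpos.ne')
    exact ⟨w, hw⟩
  set F : Set (V × V) := {e : V × V | E e.1 e.2 ∧ e.1 ∈ A ∧ e.2 ∈ B} with hFdef
  let f : V → V × V := fun v =>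
    if hv : ∃ w, E x w ∧ E w v then (hv.choose, v) else (v, v)
  have hmaps : ∀ v ∈ B, f v ∈ F := by
    intro v hv
    have hv' := hwit v hv
    simp only [f, dif_pos hv']
    exact ⟨hv'.choose_spec.2, hout _ hv'.choose_spec.1, hv⟩
  have hinj : Set.InjOn f B := by
    intro a ha b hb hab
    simp only [f] at hab
    split_ifs at hab <;> exact (congrArg Prod.snd hab)
  calc B.ncard ≤ F.ncard :=
        Set.ncard_le_ncard_of_injOn f hmaps hinj (Set.toFinite F)
    _ ≤ k := hF

end PaperDRD
end
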